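/- arXiv:2309.04673 — 5 statements merged into one kernel-verified Lean document; each statement's English description precedes it below -/
import Mathlib

section
/- Let Γ be a group acting on V = ℝⁿ through a homomorphism ρ: Γ → GL(V), leaving invariant a lattice L₀ ⊆ ℚⁿ and a nonempty open non-degenerate convex cone C ⊆ V. Suppose there exists a polyhedral cone Π ⊆ C₊ such that Γ·Π ⊇ C ∩ ℚⁿ. Then for every Γ-invariant lattice L ⊆ ℚⁿ, the group Γ has only finitely many orbits in the set of extreme points of conv(C ∩ L). -/
open Set Pointwise

noncomputable section

/-- `V = ℝⁿ`. -/
abbrev EV (n : ℕ) : Type := Fin n → ℝ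

/-- The rational points `V(ℚ) = ℚⁿ` of `ℝⁿ`. -/
def ratPts (n : ℕ) : Set (EV n) := {x | ∀ i, ∃ q : ℚ, x i = (q : ℝ)}

/-- A convex cone: a convex set closed under positive scalar multiplication. -/
def IsConvexCone {M : Type*} [AddCommGroup M] [Module ℝ M] (C : Set M) : Prop :=
  Convex ℝ C ∧ ∀ x ∈ C, ∀ t : ℝ, 0 < t → t • x ∈ C

/-- A polyhedral cone: the set of nonnegative linear combinations of finitely many vectors. -/
def IsPolyCone {M : Type*} [AddCommGroup M] [Module ℝ M] (P : Set M) : Prop :=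
  ∃ (k : ℕ) (v : Fin k → M),
    P = {x | ∃ c : Fin k → ℝ, (∀ i, 0 ≤ c i) ∧ x = ∑ i, c i • v i}

/-- A rational polyhedral cone with respect to a set `Q` of "rational points":
a cone generated by finitely many vectors belonging to `Q`. -/
def IsRatPolyCone {M : Type*} [AddCommGroup M] [Module ℝ M] (Q P : Set M) : Prop :=
  ∃ (k : ℕ) (v : Fin k → M), (∀ i, v i ∈ Q) ∧
    P = {x | ∃ c : Fin k → ℝ, (∀ i, 0 ≤ c i) ∧ x = ∑ i, c i • v i}

/-- A lattice in `ℝⁿ`: the ℤ-span of an ℝ-basis (hence free of rank `n`, spanning `V`). -/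
def IsLattice (n : ℕ) (L : AddSubgroup (EV n)) : Prop :=
  ∃ b : Module.Basis (Fin n) ℝ (EV n), (∀ i, b i ∈ L) ∧ L = AddSubgroup.closure (Set.range b)

/-- `C₊ := conv(C̄ ∩ ℚⁿ)`, the convex hull of the rational points of the closure of `C`. -/
def plusPart (n : ℕ) (C : Set (EV n)) : Set (EV n) :=
  convexHull ℝ (closure C ∩ ratPts n)

/-- Non-degeneracy: the closure of `C` contains no nonzero vector subspace. -/
def NonDegen {M : Type*} [AddCommGroup M] [Module ℝ M] [TopologicalSpace M] (C : Set M) : Prop :=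
  ∀ U : Submodule ℝ M, (U : Set M) ⊆ closure C → U = ⊥

/- ### Auxiliary lemmas -/

section Aux

variable {n : ℕ} {C : Set (EV n)}

lemma zero_mem_closure_cone (hne : C.Nonempty) (hcone : IsConvexCone C) :
    (0 : EV n) ∈ closure C := by
  obtain ⟨x₀, hx₀⟩ := hne
  have htend : Filter.Tendsto (fun k : ℕ => (1 / ((k : ℝ) + 1)) • x₀) Filter.atTop (nhds 0) := by
    have := (tendsto_one_div_add_atTop_nhds_zero_nat (𝕜 := ℝ)).smul_const x₀
    simpa using this
  refine mem_closure_of_tendsto htend (Filter.Eventually.of_forall fun k => ?_)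
  exact hcone.2 x₀ hx₀ _ (by positivity)

lemma smul_mem_closure_cone (hcone : IsConvexCone C) {x : EV n} (hx : x ∈ closure C)
    {t : ℝ} (ht : 0 < t) : t • x ∈ closure C := by
  have hcont : Continuous fun y : EV n => t • y := continuous_const_smul t
  have h1 : (fun y : EV n => t • y) '' closure C ⊆ closure ((fun y : EV n => t • y) '' C) :=
    image_closure_subset_closure_image hcont
  have h2 : (fun y : EV n => t • y) '' C ⊆ C := by
    rintro _ ⟨y, hy, rfl⟩; exact hcone.2 y hy t ht
  exact (closure_mono h2) (h1 ⟨x, hx, rfl⟩)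

lemma combo_mem_cone (hopen : IsOpen C) (hcone : IsConvexCone C) {a b : EV n}
    (ha : a ∈ C) (hb : b ∈ closure C) {t1 t2 : ℝ} (ht1 : 0 < t1) (ht2 : 0 ≤ t2)
    (ht : t1 + t2 = 1) : t1 • a + t2 • b ∈ C := by
  have := hcone.1.combo_interior_closure_mem_interior (x := a) (y := b)
    (by rwa [hopen.interior_eq]) hb ht1 ht2 ht
  rwa [hopen.interior_eq] at this

lemma add_mem_cone (hopen : IsOpen C) (hcone : IsConvexCone C) {a b : EV n}
    (ha : a ∈ C) (hb : b ∈ closure C) : a + b ∈ C := by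
  have h := combo_mem_cone hopen hcone ha hb (t1 := 1/2) (t2 := 1/2) (by norm_num) (by norm_num)
    (by norm_num)
  have h2 := hcone.2 _ h 2 (by norm_num)
  have he : (2:ℝ) • ((1/2 : ℝ) • a + (1/2 : ℝ) • b) = a + b := by module
  rwa [he] at h2

lemma coneSum_mem_closure {ι : Type*} [Fintype ι] (hne : C.Nonempty) (hcone : IsConvexCone C)
    (u : ι → EV n) (hu : ∀ j, u j ∈ closure C) (c : ι → ℝ) (hc : ∀ j, 0 ≤ c j) :
    ∑ j, c j • u j ∈ closure C := by
  have hconv : Convex ℝ (closure C) := hcone.1.closure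
  by_cases hs : ∑ j, c j = 0
  · have hz : ∀ j ∈ Finset.univ, c j • u j = 0 := by
      intro j _
      have : c j = 0 :=
        Finset.sum_eq_zero_iff_of_nonneg (fun j _ => hc j) |>.mp hs j (Finset.mem_univ j)
      simp [this]
    rw [Finset.sum_congr rfl hz]
    simpa using zero_mem_closure_cone hne hcone
  · have hspos : 0 < ∑ j, c j := lt_of_le_of_ne (Finset.sum_nonneg fun j _ => hc j) (Ne.symm hs)
    have hmem : ∑ j, ((∑ i, c i)⁻¹ * c j) • u j ∈ closure C := by
      apply hconv.sum_mem (fun j _ => mul_nonneg (by positivity) (hc j))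
      · rw [← Finset.mul_sum]
        field_simp
      · exact fun j _ => hu j
    have h2 := smul_mem_closure_cone hcone hmem hspos
    rw [Finset.smul_sum] at h2
    have he : ∀ j ∈ Finset.univ, (∑ i, c i) • (((∑ i, c i)⁻¹ * c j) • u j) = c j • u j := by
      intro j _; rw [smul_smul]; field_simp
    rwa [Finset.sum_congr rfl he] at h2

/-- The cast map ℚⁿ → ℝⁿ as a ℚ-linear map. -/
def castQ (n : ℕ) : (Fin n → ℚ) →ₗ[ℚ] EV n where
  toFun v := fun i => ((v i : ℝ))
  map_add' u v := by funext i; simp only [Pi.add_apply]; push_cast; rfl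
  map_smul' q v := by
    funext i
    simp only [RingHom.id_apply, Pi.smul_apply, Rat.smul_def]
    push_cast; ring

lemma mem_ratPts_iff {x : EV n} : x ∈ ratPts n ↔ ∃ v : Fin n → ℚ, castQ n v = x := by
  constructor
  · intro h
    choose v hv using h
    exact ⟨v, by funext i; exact (hv i).symm⟩
  · rintro ⟨v, rfl⟩ i; exact ⟨v i, rfl⟩

lemma rat_den_scale (r : ℚ) (m : ℕ) (h : r.den ∣ m) : ∃ z : ℤ, (m : ℚ) * r = z := by
  obtain ⟨k, hk⟩ := h
  refine ⟨r.num * k, ?_⟩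
  subst hk
  push_cast
  rw [mul_comm ((r.den : ℚ)) ((k : ℚ)), mul_assoc, Rat.den_mul_eq_num]
  ring

/-- Any rational point has a positive integer multiple in any rational lattice. -/
lemma ratScale {L : AddSubgroup (EV n)} (hlat : IsLattice n L)
    (hLQ : (L : Set (EV n)) ⊆ ratPts n) {q : EV n} (hq : q ∈ ratPts n) :
    ∃ N : ℕ, 0 < N ∧ (N : ℝ) • q ∈ L := by
  obtain ⟨b, hbL, hLeq⟩ := hlat
  have hb'ex : ∀ i, ∃ v : Fin n → ℚ, castQ n v = b i := fun i =>
    mem_ratPts_iff.mp (hLQ (hbL i))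
  choose b' hb' using hb'ex
  have hli : LinearIndependent ℚ b' := by
    rw [Fintype.linearIndependent_iff]
    intro g hg
    have hcast : castQ n (∑ i, g i • b' i) = 0 := by rw [hg, map_zero]
    rw [map_sum] at hcast
    simp_rw [map_smul] at hcast
    have h2 : ∑ i, ((g i : ℝ)) • b i = 0 := by
      rw [← hcast]
      refine Finset.sum_congr rfl fun i _ => ?_
      rw [hb' i, Rat.cast_smul_eq_qsmul ℝ]
    have h3 := Fintype.linearIndependent_iff.mp b.linearIndependent (fun i => (g i : ℝ)) h2
    intro i
    have h4 : (g i : ℝ) = 0 := by simpa using h3 i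
    exact_mod_cast h4
  rcases Nat.eq_zero_or_pos n with hn | hn
  · refine ⟨1, one_pos, ?_⟩
    have hq0 : ((1:ℕ):ℝ) • q = 0 := by
      subst hn
      funext i; exact i.elim0
    rw [hq0]; exact L.zero_mem
  haveI : Nonempty (Fin n) := ⟨⟨0, hn⟩⟩
  have hspan : Submodule.span ℚ (Set.range b') = ⊤ :=
    hli.span_eq_top_of_card_eq_finrank (by simp [Module.finrank_fin_fun])
  obtain ⟨q', rfl⟩ := mem_ratPts_iff.mp hq
  have hq' : q' ∈ Submodule.span ℚ (Set.range b') := hspan ▸ Submodule.mem_top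
  rw [Finsupp.mem_span_range_iff_exists_finsupp] at hq'
  obtain ⟨c, hc⟩ := hq'
  set cc : Fin n → ℚ := fun i => c i with hcc
  have hc2 : ∑ i, cc i • b' i = q' := by
    rw [← hc]
    rw [Finsupp.sum_fintype]
    intro i; simp
  set N : ℕ := ∏ i, (cc i).den with hN
  have hNpos : 0 < N := Finset.prod_pos fun i _ => (cc i).pos
  have hdvd : ∀ i, (cc i).den ∣ N := fun i => Finset.dvd_prod_of_mem _ (Finset.mem_univ i)
  choose z hz using fun i => rat_den_scale (cc i) N (hdvd i)
  refine ⟨N, hNpos, ?_⟩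
  have key : (N : ℝ) • castQ n q' = ∑ i, z i • b i := by
    have h1 : (N : ℚ) • q' = ∑ i, (z i : ℚ) • b' i := by
      rw [← hc2, Finset.smul_sum]
      refine Finset.sum_congr rfl fun i _ => ?_
      rw [smul_smul, ← hz i]
    have h2 : castQ n ((N : ℚ) • q') = ∑ i, z i • b i := by
      rw [h1, map_sum]
      refine Finset.sum_congr rfl fun i _ => ?_
      rw [map_smul, hb' i]
      exact Int.cast_smul_eq_zsmul ℚ _ _
    have h3 : castQ n ((N : ℚ) • q') = (N : ℝ) • castQ n q' := by
      rw [map_smul]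
      rw [Nat.cast_smul_eq_nsmul ℚ, Nat.cast_smul_eq_nsmul ℝ]
    rw [← h3, h2]
  rw [key]
  exact AddSubgroup.sum_mem L fun i _ => AddSubgroup.zsmul_mem L (hbL i) (z i)

/-- Lattice points have integer coordinates w.r.t. the defining basis. -/
lemma lattice_int_coords {L : AddSubgroup (EV n)} {b : Module.Basis (Fin n) ℝ (EV n)}
    (hLeq : L = AddSubgroup.closure (Set.range b)) {x : EV n} (hx : x ∈ L) :
    ∀ i, ∃ z : ℤ, b.repr x i = z := by
  subst hLeq
  induction hx using AddSubgroup.closure_induction with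
  | mem y hy =>
    obtain ⟨j, rfl⟩ := hy
    intro i
    refine ⟨if j = i then 1 else 0, ?_⟩
    rw [b.repr_self]
    simp [Finsupp.single_apply]
  | zero => intro i; exact ⟨0, by simp⟩
  | add y z _ _ hy hz =>
    intro i
    obtain ⟨a, ha⟩ := hy i
    obtain ⟨c, hc⟩ := hz i
    exact ⟨a + c, by rw [map_add]; simp [ha, hc]⟩
  | neg y _ hy =>
    intro i
    obtain ⟨a, ha⟩ := hy i
    exact ⟨-a, by rw [map_neg]; simp [ha]⟩

/-- A bounded set meets a lattice in finitely many points. -/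
lemma lattice_bounded_finite {L : AddSubgroup (EV n)} (hlat : IsLattice n L)
    (s : Set (EV n)) (hs : Bornology.IsBounded s) : (s ∩ (L : Set (EV n))).Finite := by
  obtain ⟨b, hbL, hLeq⟩ := hlat
  obtain ⟨R, hR⟩ := (Metric.isBounded_iff_subset_closedBall 0).mp hs
  set g : EV n →L[ℝ] (Fin n → ℝ) :=
    LinearMap.toContinuousLinearMap (b.equivFun : EV n →ₗ[ℝ] (Fin n → ℝ))
  set M : ℤ := ⌈‖g‖ * R⌉ with hM
  set T : Set (Fin n → ℤ) := Set.pi Set.univ (fun _ => Set.Icc (-M) M) with hT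
  have hTfin : T.Finite := Set.Finite.pi fun _ => Set.finite_Icc _ _
  have hsub : s ∩ (L : Set (EV n)) ⊆ (fun z : Fin n → ℤ => ∑ i, (z i : ℝ) • b i) '' T := by
    rintro x ⟨hxs, hxL⟩
    choose z hz using lattice_int_coords hLeq hxL
    refine ⟨z, ?_, ?_⟩
    · intro i _
      have hnorm : ‖x‖ ≤ R := by
        have := hR hxs
        simpa [Metric.mem_closedBall] using this
      have hb1 : |b.repr x i| ≤ ‖g‖ * R := by
        have h1 : ‖g x‖ ≤ ‖g‖ * ‖x‖ := g.le_opNorm x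
        have h2 : |g x i| ≤ ‖g x‖ := by
          have := norm_le_pi_norm (g x) i
          simpa [Real.norm_eq_abs] using this
        have h3 : g x i = b.repr x i := by
          simp [g, Module.Basis.equivFun_apply]
        rw [h3] at h2
        nlinarith [norm_nonneg x, norm_nonneg g, mul_le_mul_of_nonneg_left hnorm (norm_nonneg g)]
      rw [hz i] at hb1
      rw [Set.mem_Icc]
      constructor
      · have hlow : -(‖g‖ * R) ≤ (z i : ℝ) := by cases abs_le.mp hb1; linarith
        have h4 : (-M : ℝ) ≤ (z i : ℝ) := by
          have : -(M : ℝ) ≤ -(‖g‖ * R) := by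
            simp only [neg_le_neg_iff]
            exact_mod_cast Int.le_ceil _
          linarith
        exact_mod_cast h4
      · have h5 : (z i : ℝ) ≤ ‖g‖ * R := (abs_le.mp hb1).2
        have h6 : (z i : ℝ) ≤ (M : ℝ) := le_trans h5 (Int.le_ceil _)
        exact_mod_cast h6
    · have hrepr := b.sum_repr x
      rw [← hrepr]
      refine Finset.sum_congr rfl fun i _ => ?_
      rw [hz i]
  exact Set.Finite.subset (hTfin.image _) hsub

/-- A linear equivalence maps extreme points to extreme points of the image. -/
lemma extremePoints_image_equiv (f : EV n ≃ₗ[ℝ] EV n) (s : Set (EV n)) {x : EV n}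
    (hx : x ∈ s.extremePoints ℝ) : f x ∈ (f '' s).extremePoints ℝ := by
  rw [mem_extremePoints] at hx ⊢
  refine ⟨⟨x, hx.1, rfl⟩, ?_⟩
  rintro _ ⟨y, hy, rfl⟩ _ ⟨z, hz, rfl⟩ hseg
  have himg : (⇑f) '' openSegment ℝ y z = openSegment ℝ (f y) (f z) := by
    have := image_openSegment ℝ f.toLinearMap.toAffineMap y z
    simpa using this
  rw [← himg] at hseg
  obtain ⟨w, hw, hwx⟩ := hseg
  have hwx' : w = x := f.injective hwx
  subst hwx'
  obtain ⟨h1, h2⟩ := hx.2 y hy z hz hw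
  rw [h1, h2]
  exact ⟨rfl, rfl⟩

/-- Decompose a member of a convex hull as a finite nonneg combination (Fintype version). -/
lemma convexHull_decomp {S : Set (EV n)} {x : EV n} (hx : x ∈ convexHull ℝ S) :
    ∃ (m : ℕ) (w : Fin m → ℝ) (z : Fin m → EV n),
      (∀ l, 0 ≤ w l) ∧ (∀ l, z l ∈ S) ∧ x = ∑ l, w l • z l := by
  rw [convexHull_eq] at hx
  obtain ⟨ι, t, w, z, hw0, hw1, hzS, hcm⟩ := hx
  rw [Finset.centerMass_eq_of_sum_1 _ _ hw1] at hcm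
  classical
  by_cases htne : t.Nonempty
  · set e := t.equivFin
    refine ⟨t.card, fun l => w (e.symm l).1, fun l => z (e.symm l).1, ?_, ?_, ?_⟩
    · intro l; exact hw0 _ (e.symm l).2
    · intro l; exact hzS _ (e.symm l).2
    · rw [← hcm]
      rw [← Finset.sum_attach t (fun i => w i • z i)]
      exact (Equiv.sum_comp e.symm (fun i => w i.1 • z i.1)).symm
  · exfalso
    rw [Finset.not_nonempty_iff_eq_empty] at htne
    subst htne
    simp at hw1

end Aux

/-- If there is a polyhedral cone `Π ⊆ C₊` with `Γ·Π ⊇ C ∩ ℚⁿ`, then for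
every `Γ`-invariant lattice `L ⊆ ℚⁿ`, `Γ` has finitely many orbits in the set of extreme
points of `conv(C ∩ L)`. -/
theorem statement1 {n : ℕ} {Γ : Type*} [Group Γ]
    (ρ : Γ →* (EV n ≃ₗ[ℝ] EV n))
    (L₀ : AddSubgroup (EV n)) (hL₀lat : IsLattice n L₀)
    (hL₀Q : (L₀ : Set (EV n)) ⊆ ratPts n)
    (hL₀inv : ∀ γ : Γ, (ρ γ) '' (L₀ : Set (EV n)) = (L₀ : Set (EV n)))
    (C : Set (EV n)) (hne : C.Nonempty) (hopen : IsOpen C)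
    (hcone : IsConvexCone C) (hnd : NonDegen C)
    (hCinv : ∀ γ : Γ, (ρ γ) '' C = C)
    (P : Set (EV n)) (hP : IsPolyCone P) (hPsub : P ⊆ plusPart n C)
    (hPcover : C ∩ ratPts n ⊆ ⋃ γ : Γ, (ρ γ) '' P) :
    ∀ L : AddSubgroup (EV n), IsLattice n L → (L : Set (EV n)) ⊆ ratPts n →
      (∀ γ : Γ, (ρ γ) '' (L : Set (EV n)) = (L : Set (EV n))) →
      ∃ F : Finset (EV n),
        (↑F : Set (EV n)) ⊆ (convexHull ℝ (C ∩ (L : Set (EV n)))).extremePoints ℝ ∧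
        ∀ e ∈ (convexHull ℝ (C ∩ (L : Set (EV n)))).extremePoints ℝ,
          ∃ γ : Γ, ∃ f ∈ F, (ρ γ) f = e := by
  intro L hLlat hLQ hLinv
  classical
  set K : Set (EV n) := convexHull ℝ (C ∩ (L : Set (EV n))) with hK
  set E : Set (EV n) := K.extremePoints ℝ with hE
  -- Step 1: a finite family of generators in C̄ ∩ L dominating P
  obtain ⟨k, v, hPeq⟩ := hP
  have hvP : ∀ i, v i ∈ P := by
    intro i
    rw [hPeq]
    refine ⟨fun j => if j = i then 1 else 0, fun j => ?_, ?_⟩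
    · show (0:ℝ) ≤ if j = i then 1 else 0
      split_ifs <;> norm_num
    simp [ite_smul]
  have hdec : ∀ i : Fin k, ∃ (m : ℕ) (w : Fin m → ℝ) (z : Fin m → EV n),
      (∀ l, 0 ≤ w l) ∧ (∀ l, z l ∈ closure C ∩ ratPts n) ∧ v i = ∑ l, w l • z l := by
    intro i
    exact convexHull_decomp (hPsub (hvP i))
  choose m w z hw0 hzM hveq using hdec
  have hscale : ∀ j : (Σ i : Fin k, Fin (m i)), ∃ N : ℕ, 0 < N ∧
      (N : ℝ) • z j.1 j.2 ∈ L := fun j => ratScale hLlat hLQ (hzM j.1 j.2).2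
  choose N hN0 hNL using hscale
  set u : (Σ i : Fin k, Fin (m i)) → EV n := fun j => (N j : ℝ) • z j.1 j.2 with hu
  have huL : ∀ j, u j ∈ L := hNL
  have huC : ∀ j, u j ∈ closure C := fun j =>
    smul_mem_closure_cone hcone (hzM j.1 j.2).1 (by exact_mod_cast hN0 j)
  -- P is contained in the cone generated by u
  have hPcone : ∀ x ∈ P, ∃ c : (Σ i : Fin k, Fin (m i)) → ℝ,
      (∀ j, 0 ≤ c j) ∧ x = ∑ j, c j • u j := by
    intro x hx
    rw [hPeq] at hx
    obtain ⟨c, hc0, rfl⟩ := hx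
    refine ⟨fun j => c j.1 * w j.1 j.2 / (N j : ℝ), ?_, ?_⟩
    · intro j
      have h1 : (0:ℝ) < N j := by exact_mod_cast hN0 j
      show 0 ≤ c j.1 * w j.1 j.2 / (N j : ℝ)
      exact div_nonneg (mul_nonneg (hc0 j.1) (hw0 j.1 j.2)) (le_of_lt h1)
    · have hstep : ∀ i ∈ Finset.univ, c i • v i = ∑ l : Fin (m i), (c i * w i l) • z i l := by
        intro i _
        rw [hveq i, Finset.smul_sum]
        refine Finset.sum_congr rfl fun l _ => ?_
        rw [smul_smul]
      rw [Finset.sum_congr rfl hstep]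
      rw [← Finset.univ_sigma_univ, Finset.sum_sigma]
      refine Finset.sum_congr rfl fun i _ => Finset.sum_congr rfl fun l _ => ?_
      have hNne : ((N ⟨i, l⟩ : ℝ)) ≠ 0 := by
        exact_mod_cast (hN0 ⟨i, l⟩).ne'
      show (c i * w i l) • z i l = (c i * w i l / (N ⟨i, l⟩ : ℝ)) • u ⟨i, l⟩
      rw [hu]
      rw [smul_smul]
      rw [div_mul_cancel₀ _ hNne]
  -- The bounded "box" and its finiteness
  set Box : Set (EV n) := (fun c : (Σ i : Fin k, Fin (m i)) → ℝ => ∑ j, c j • u j) ''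
      (Set.pi Set.univ fun _ => Set.Icc (0:ℝ) 2) with hBox
  have hBoxcpt : IsCompact Box := by
    apply IsCompact.image (isCompact_univ_pi fun _ => isCompact_Icc)
    exact continuous_finset_sum _ fun j _ => (continuous_apply j).smul continuous_const
  have hfin : (Box ∩ (L : Set (EV n))).Finite :=
    lattice_bounded_finite hLlat _ hBoxcpt.isBounded
  have hfinE : (Box ∩ (L : Set (EV n)) ∩ E).Finite :=
    hfin.subset (Set.inter_subset_left)
  refine ⟨hfinE.toFinset, ?_, ?_⟩
  · intro f hf
    rw [Set.Finite.coe_toFinset] at hf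
    exact hf.2
  · intro e he
    have heCL : e ∈ C ∩ (L : Set (EV n)) := extremePoints_convexHull_subset he
    have heQ : e ∈ ratPts n := hLQ heCL.2
    have hecover := hPcover ⟨heCL.1, heQ⟩
    rw [Set.mem_iUnion] at hecover
    obtain ⟨γ, x, hxP, hxe⟩ := hecover
    -- x is the preimage of e
    have hx_eq : (ρ γ⁻¹) e = x := by
      rw [← hxe]
      have h1 : (ρ γ⁻¹) ((ρ γ) x) = ((ρ γ⁻¹) * (ρ γ)) x := rfl
      rw [h1, ← map_mul, inv_mul_cancel, map_one]
      rfl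
    -- invariance of E
    have hCLinv : ∀ δ : Γ, (ρ δ) '' (C ∩ (L : Set (EV n))) = C ∩ (L : Set (EV n)) := by
      intro δ
      rw [Set.image_inter (ρ δ).injective, hCinv δ, hLinv δ]
    have hKinv : ∀ δ : Γ, (ρ δ) '' K = K := by
      intro δ
      rw [hK]
      have := (ρ δ).toLinearMap.image_convexHull (C ∩ (L : Set (EV n)))
      rw [show ((ρ δ).toLinearMap : EV n → EV n) = ⇑(ρ δ) from rfl] at this
      rw [this, hCLinv δ]
    have hEinv : ∀ δ : Γ, ∀ y, y ∈ E → (ρ δ) y ∈ E := by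
      intro δ y hy
      have := extremePoints_image_equiv (ρ δ) K (by rwa [hE] at hy)
      rw [hKinv δ] at this
      rwa [hE]
    have hxE : x ∈ E := by
      rw [← hx_eq]
      exact hEinv γ⁻¹ e he
    have hxCL : x ∈ C ∩ (L : Set (EV n)) := extremePoints_convexHull_subset (by rwa [hE] at hxE)
    obtain ⟨c, hc0, hxsum⟩ := hPcone x hxP
    by_cases hbig : ∃ j, u j ≠ 0 ∧ 2 ≤ c j
    · exfalso
      obtain ⟨j, hju, hjc⟩ := hbig
      -- x - 2 u j ∈ closure C
      have h2d : x - (2:ℝ) • u j ∈ closure C := by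
        have hrw : x - (2:ℝ) • u j =
            ∑ j', (fun j' => if j' = j then c j' - 2 else c j') j' • u j' := by
          have : ∀ j' ∈ Finset.univ,
              (fun j' => if j' = j then c j' - 2 else c j') j' • u j' =
              c j' • u j' - (if j' = j then (2:ℝ) else 0) • u j' := by
            intro j' _
            by_cases h : j' = j <;> simp [h, sub_smul]
          rw [Finset.sum_congr rfl this, Finset.sum_sub_distrib, ← hxsum]
          congr 1
          have h2 : ∀ j' ∈ Finset.univ,
              (if j' = j then (2:ℝ) else 0) • u j' = if j' = j then (2:ℝ) • u j' else 0 := by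
            intro j' _; split_ifs <;> simp
          rw [Finset.sum_congr rfl h2,
            Finset.sum_ite_eq' Finset.univ j (fun j' => (2:ℝ) • u j')]
          simp
        rw [hrw]
        apply coneSum_mem_closure hne hcone _ huC
        intro j'
        by_cases h : j' = j <;> simp [h]
        · subst h; linarith
        · exact hc0 j'
      have hxd : x - u j ∈ C := by
        have hcm := combo_mem_cone hopen hcone hxCL.1 h2d (t1 := 1/2) (t2 := 1/2)
          (by norm_num) (by norm_num) (by norm_num)
        have heq : (1/2 : ℝ) • x + (1/2 : ℝ) • (x - (2:ℝ) • u j) = x - u j := by module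
        rwa [heq] at hcm
      have hxa : x + u j ∈ C := add_mem_cone hopen hcone hxCL.1 (huC j)
      have hxdK : x - u j ∈ K := subset_convexHull ℝ _ ⟨hxd, L.sub_mem hxCL.2 (huL j)⟩
      have hxaK : x + u j ∈ K := subset_convexHull ℝ _ ⟨hxa, L.add_mem hxCL.2 (huL j)⟩
      have hseg : x ∈ openSegment ℝ (x - u j) (x + u j) := by
        refine ⟨1/2, 1/2, by norm_num, by norm_num, by norm_num, ?_⟩
        module
      have hext := (mem_extremePoints.mp (by rwa [hE] at hxE)).2
      have := (hext (x - u j) hxdK (x + u j) hxaK hseg).1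
      have : u j = 0 := by
        have h := sub_eq_self.mp this
        exact h
      exact hju this
    · push_neg at hbig
      refine ⟨γ, x, ?_, hxe⟩
      rw [Set.Finite.mem_toFinset]
      refine ⟨⟨?_, hxCL.2⟩, hxE⟩
      refine ⟨fun j => min (c j) 2, ?_, ?_⟩
      · intro j _
        exact ⟨le_min (hc0 j) (by norm_num), min_le_right _ _⟩
      · rw [hxsum]
        refine (Finset.sum_congr rfl fun j _ => ?_).symm
        by_cases h : u j = 0
        · simp [h]
        · show c j • u j = min (c j) 2 • u j
          rw [min_eq_left (le_of_lt (hbig j h))]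
end
end

section
/- Let C be a nonempty open convex cone in V = ℝⁿ and let L ⊆ V be a discrete additive subgroup. Let v₁, …, v_r ∈ C̄ ∩ L and let Π be the closed convex cone generated by v₁, …, v_r. Then the set { e ∈ C ∩ L ∩ Π : e is an extreme point of conv(C ∩ L) } is finite. -/
open Set Pointwise

noncomputable section

/-- Let `C` be a nonempty open convex cone in `ℝⁿ`, `L` a discrete
additive subgroup, `v₁, …, v_r ∈ C̄ ∩ L`, and `Π` the closed convex cone they generate.
Then the set of extreme points of `conv(C ∩ L)` lying in `C ∩ L ∩ Π` is finite. -/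
theorem statement3 {n : ℕ}
    (C : Set (EV n)) (hne : C.Nonempty) (hopen : IsOpen C) (hcone : IsConvexCone C)
    (L : AddSubgroup (EV n)) (hdisc : DiscreteTopology L)
    (r : ℕ) (v : Fin r → EV n) (hv : ∀ i, v i ∈ closure C ∧ v i ∈ L) :
    Set.Finite {e : EV n | e ∈ C ∧ e ∈ L ∧
      (∃ c : Fin r → ℝ, (∀ i, 0 ≤ c i) ∧ e = ∑ i, c i • v i) ∧
      e ∈ (convexHull ℝ (C ∩ (L : Set (EV n)))).extremePoints ℝ} := by
  classical
  have hconv : Convex ℝ C := hcone.1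
  have hCo : interior C = C := hopen.interior_eq
  -- 0 ∈ closure C
  have h0 : (0 : EV n) ∈ closure C := by
    obtain ⟨x₀, hx₀⟩ := hne
    have h1 : Filter.Tendsto (fun k : ℕ => (1 / (k + 1) : ℝ)) Filter.atTop (nhds 0) :=
      tendsto_one_div_add_atTop_nhds_zero_nat
    have h2 : Filter.Tendsto (fun k : ℕ => (1 / (k + 1) : ℝ) • x₀) Filter.atTop (nhds 0) := by
      simpa using h1.smul_const x₀
    exact mem_closure_of_tendsto h2 (Filter.Eventually.of_forall fun k =>
      hcone.2 x₀ hx₀ _ (by positivity))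
  -- closure C closed under positive scaling
  have hsmulcl : ∀ x ∈ closure C, ∀ t : ℝ, 0 < t → t • x ∈ closure C := by
    intro x hx t ht
    rcases mem_closure_iff_seq_limit.1 hx with ⟨u, hu, hul⟩
    exact mem_closure_of_tendsto (hul.const_smul t)
      (Filter.Eventually.of_forall fun k => hcone.2 _ (hu k) t ht)
  -- closure C closed under addition
  have haddcl : ∀ x ∈ closure C, ∀ y ∈ closure C, x + y ∈ closure C := by
    intro x hx y hy
    have hm : (1/2 : ℝ) • x + (1/2 : ℝ) • y ∈ closure C :=
      hconv.closure hx hy (by norm_num) (by norm_num) (by norm_num)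
    have h2 := hsmulcl _ hm 2 (by norm_num)
    have : (2:ℝ) • ((1/2 : ℝ) • x + (1/2 : ℝ) • y) = x + y := by module
    rwa [this] at h2
  -- sums of nonneg combos in closure C
  have hsum : ∀ (c : Fin r → ℝ), (∀ i, 0 ≤ c i) → ∀ s : Finset (Fin r),
      (∑ i ∈ s, c i • v i) ∈ closure C := by
    intro c hc s
    induction s using Finset.induction_on with
    | empty => simpa using h0
    | insert a s' hj ih =>
      rw [Finset.sum_insert hj]
      refine haddcl _ ?_ _ ih
      rcases (hc a).lt_or_eq with h | h
      · exact hsmulcl _ (hv a).1 _ h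
      · rw [← h, zero_smul]; exact h0
  -- x ∈ C, y ∈ closure C ⇒ x + y ∈ C
  have hC_add : ∀ x ∈ C, ∀ y ∈ closure C, x + y ∈ C := by
    intro x hx y hy
    have hm : (1/2 : ℝ) • x + (1/2 : ℝ) • y ∈ interior C :=
      hconv.combo_interior_closure_mem_interior (by rwa [hCo]) hy (by norm_num) (by norm_num)
        (by norm_num)
    rw [hCo] at hm
    have h2 := hcone.2 _ hm 2 (by norm_num)
    have : (2:ℝ) • ((1/2 : ℝ) • x + (1/2 : ℝ) • y) = x + y := by module
    rwa [this] at h2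
  set R : ℝ := ∑ i, ‖v i‖ with hR
  set S := {e : EV n | e ∈ C ∧ e ∈ L ∧
      (∃ c : Fin r → ℝ, (∀ i, 0 ≤ c i) ∧ e = ∑ i, c i • v i) ∧
      e ∈ (convexHull ℝ (C ∩ (L : Set (EV n)))).extremePoints ℝ} with hS
  have hbound : ∀ e ∈ S, ‖e‖ ≤ R := by
    rintro e ⟨heC, heL, ⟨c, hc0, hce⟩, hext⟩
    have hcle : ∀ j, v j ≠ 0 → c j ≤ 1 := by
      intro j hvj
      by_contra hgt
      push_neg at hgt
      have hcj : (0:ℝ) < c j := lt_trans one_pos hgt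
      set u : EV n := ∑ i ∈ Finset.univ.erase j, c i • v i with hu
      have hu_cl : u ∈ closure C := hsum c hc0 _
      have hedecomp : e = c j • v j + u := by
        rw [hce, hu]
        exact (Finset.add_sum_erase _ _ (Finset.mem_univ j)).symm
      have hsub : e - v j ∈ C := by
        have hcomb : (1 - 1/c j) • e + (1/c j) • u ∈ interior C :=
          hconv.combo_interior_closure_mem_interior (by rwa [hCo]) hu_cl
            (by rw [sub_pos, div_lt_one hcj]; exact hgt) (by positivity) (by ring)
        rw [hCo] at hcomb
        have heq : (1 - 1/c j) • e + (1/c j) • u = e - v j := by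
          rw [hedecomp]
          match_scalars <;> field_simp <;> ring
        rwa [heq] at hcomb
      have hadd : e + v j ∈ C := hC_add e heC (v j) (hv j).1
      have h1 : e - v j ∈ convexHull ℝ (C ∩ (L : Set (EV n))) :=
        subset_convexHull ℝ _ ⟨hsub, sub_mem heL (hv j).2⟩
      have h2 : e + v j ∈ convexHull ℝ (C ∩ (L : Set (EV n))) :=
        subset_convexHull ℝ _ ⟨hadd, add_mem heL (hv j).2⟩
      have hseg : e ∈ openSegment ℝ (e - v j) (e + v j) :=
        ⟨1/2, 1/2, by norm_num, by norm_num, by norm_num, by module⟩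
      have hkey := hext.2 h1 h2 hseg
      exact hvj (sub_eq_self.mp hkey)
    calc ‖e‖ = ‖∑ i, c i • v i‖ := by rw [hce]
      _ ≤ ∑ i, ‖c i • v i‖ := norm_sum_le _ _
      _ ≤ ∑ i, ‖v i‖ := by
          refine Finset.sum_le_sum fun i _ => ?_
          rw [norm_smul]
          rcases eq_or_ne (v i) 0 with h | h
          · simp [h]
          · have h1 := hcle i h
            rw [Real.norm_eq_abs, abs_of_nonneg (hc0 i)]
            nlinarith [norm_nonneg (v i)]
  have hLclosed : IsClosed (L : Set (EV n)) := AddSubgroup.isClosed_of_discrete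
  have hcpt : IsCompact ((L : Set (EV n)) ∩ Metric.closedBall 0 R) :=
    (isCompact_closedBall (0 : EV n) R).inter_left hLclosed
  have hdt : DiscreteTopology ((L : Set (EV n)) ∩ Metric.closedBall 0 R : Set (EV n)) :=
    DiscreteTopology.of_subset hdisc inter_subset_left
  refine (hcpt.finite ⟨hdt⟩).subset ?_
  rintro e he
  exact ⟨he.2.1, by rw [Metric.mem_closedBall, dist_zero_right]; exact hbound e he⟩
end
end

section
/- Let C be a nonempty open convex cone in a finite-dimensional real vector space V, let W := C̄ ∩ (−C̄) be the maximal vector subspace contained in the closure C̄, and let p: V → V/W be the quotient map. Then p(C̄) equals the closure of p(C) in V/W. -/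
open Set Pointwise

noncomputable section

/-- Let `C` be a nonempty open convex cone, `W = C̄ ∩ (−C̄)` the maximal
vector subspace of `C̄`, and `p : V → V/W` the quotient map. Then `p(C̄)` equals the
closure of `p(C)`. -/
theorem statement5 {V : Type*} [NormedAddCommGroup V] [NormedSpace ℝ V]
    [FiniteDimensional ℝ V]
    (C : Set V) (hne : C.Nonempty) (hopen : IsOpen C) (hcone : IsConvexCone C)
    (W : Submodule ℝ V) (hW : (W : Set V) = closure C ∩ (-(closure C))) :
    W.mkQ '' (closure C) = closure (W.mkQ '' C) := by
  obtain ⟨hconv, hsmul⟩ := hcone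
  -- C is closed under addition
  have haddC : ∀ x ∈ C, ∀ y ∈ C, x + y ∈ C := by
    intro x hx y hy
    have h := hconv hx hy (by norm_num : (0:ℝ) ≤ 1/2) (by norm_num : (0:ℝ) ≤ 1/2)
      (by norm_num)
    have h2 := hsmul _ h 2 (by norm_num)
    convert h2 using 1
    module
  -- closure C is closed under addition
  have haddcl : ∀ x ∈ closure C, ∀ y ∈ closure C, x + y ∈ closure C := by
    intro x hx y hy
    have : (x, y) ∈ closure (C ×ˢ C) := by
      rw [closure_prod_eq]; exact ⟨hx, hy⟩
    have hc : Continuous fun p : V × V => p.1 + p.2 := continuous_add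
    have := (image_closure_subset_closure_image hc) ⟨(x, y), this, rfl⟩
    refine closure_mono ?_ this
    rintro _ ⟨⟨a, b⟩, ⟨ha, hb⟩, rfl⟩
    exact haddC a ha b hb
  have hWsub : (W : Set V) ⊆ closure C := by rw [hW]; exact inter_subset_left
  -- saturation
  have hsat : W.mkQ ⁻¹' (W.mkQ '' closure C) = closure C := by
    ext x
    constructor
    · rintro ⟨y, hy, hxy⟩
      have : x - y ∈ W := by
        rw [← Submodule.Quotient.eq]; exact hxy.symm
      have hx : y + (x - y) ∈ closure C := haddcl y hy _ (hWsub this)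
      simpa using hx
    · intro hx; exact ⟨x, hx, rfl⟩
  have hoq : IsOpenQuotientMap W.mkQ := Submodule.isOpenQuotientMap_mkQ W
  have hclosed : IsClosed (W.mkQ '' closure C) := by
    rw [← hoq.isQuotientMap.isClosed_preimage, hsat]
    exact isClosed_closure
  apply Subset.antisymm
  · exact image_closure_subset_closure_image hoq.continuous
  · have : W.mkQ '' C ⊆ W.mkQ '' closure C := image_mono subset_closure
    exact hclosed.closure_subset_iff.mpr this
end
end

section
/- Let C be a nonempty open convex cone in V = ℝⁿ, let W := C̄ ∩ (−C̄) be the maximal vector subspace contained in C̄, and assume W is defined over ℚ, i.e., W is spanned by W ∩ ℚⁿ. Let p: V → V/W be the quotient map and give V/W the rational structure (V/W)(ℚ) := p(ℚⁿ). Then: (1) the cone C̃₊ computed in V/W equals p(C₊), i.e., conv( closure(p(C)) ∩ p(ℚⁿ) ) = p( conv(C̄ ∩ ℚⁿ) ); and (2) if a group Γ acts on V via ρ: Γ → GL(V) leaving invariant C and a lattice in ℚⁿ (so that W is Γ-invariant and Γ acts on V/W), and Π ⊆ C₊ is a polyhedral cone with Γ·Π ⊇ C, then p(Π) ⊆ C̃₊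 and Γ·p(Π) ⊇ p(C). -/
open Set Pointwise

noncomputable section

/-- Let `C ⊆ ℝⁿ` be a nonempty open convex cone whose maximal vector
subspace `W = C̄ ∩ (−C̄)` is defined over `ℚ`, and let `p : V → V/W` be the quotient map,
with rational structure `p(ℚⁿ)` on `V/W`. Then
(1) `conv( closure(p(C)) ∩ p(ℚⁿ) ) = p( conv(C̄ ∩ ℚⁿ) )`, i.e. `C̃₊ = p(C₊)`; and
(2) for any group `Γ` acting on `V` preserving `C` and a lattice in `ℚⁿ`, and any
polyhedral cone `Π ⊆ C₊` with `Γ·Π ⊇ C`, we have `p(Π) ⊆ C̃₊` and `Γ·p(Π) ⊇ p(C)`. -/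
theorem statement6 {n : ℕ}
    (C : Set (EV n)) (hne : C.Nonempty) (hopen : IsOpen C) (hcone : IsConvexCone C)
    (W : Submodule ℝ (EV n)) (hW : (W : Set (EV n)) = closure C ∩ (-(closure C)))
    (hWQ : Submodule.span ℝ ((W : Set (EV n)) ∩ ratPts n) = W) :
    (convexHull ℝ (closure (W.mkQ '' C) ∩ (W.mkQ '' ratPts n)) = W.mkQ '' plusPart n C) ∧
    (∀ (Γ : Type) (_ : Group Γ) (ρ : Γ →* (EV n ≃ₗ[ℝ] EV n))
      (L₀ : AddSubgroup (EV n)), IsLattice n L₀ → (L₀ : Set (EV n)) ⊆ ratPts n →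
      (∀ γ : Γ, (ρ γ) '' (L₀ : Set (EV n)) = (L₀ : Set (EV n))) →
      (∀ γ : Γ, (ρ γ) '' C = C) →
      ∀ P : Set (EV n), IsPolyCone P → P ⊆ plusPart n C →
        (C ⊆ ⋃ γ : Γ, (ρ γ) '' P) →
        (W.mkQ '' P ⊆ convexHull ℝ (closure (W.mkQ '' C) ∩ (W.mkQ '' ratPts n)) ∧
         W.mkQ '' C ⊆ ⋃ γ : Γ, W.mkQ '' ((ρ γ) '' P))) := by
  -- closure of C is a convex cone closed under addition
  have hconv : Convex ℝ (closure C) := hcone.1.closure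
  have hsmul : ∀ t : ℝ, 0 < t → ∀ x ∈ closure C, t • x ∈ closure C := by
    intro t ht x hx
    have hc : Continuous (fun y : EV n => t • y) := continuous_const_smul t
    have := image_closure_subset_closure_image (s := C) hc
    have hmem : t • x ∈ (fun y : EV n => t • y) '' closure C := ⟨x, hx, rfl⟩
    have h2 : closure ((fun y : EV n => t • y) '' C) ⊆ closure C := by
      apply closure_minimal ?_ isClosed_closure
      rintro _ ⟨y, hy, rfl⟩
      exact subset_closure (hcone.2 y hy t ht)
    exact h2 (this hmem)
  have hadd : ∀ x ∈ closure C, ∀ y ∈ closure C, x + y ∈ closure C := by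
    intro x hx y hy
    have hmid : (1/2 : ℝ) • x + (1/2 : ℝ) • y ∈ closure C := by
      apply hconv hx hy (by norm_num) (by norm_num) (by norm_num)
    have := hsmul 2 (by norm_num) _ hmid
    simpa [smul_add, smul_smul] using this
  have hWsub : (W : Set (EV n)) ⊆ closure C := by
    rw [hW]; exact inter_subset_left
  -- saturation : mkQ x = mkQ c with c ∈ closure C implies x ∈ closure C
  have hsat : ∀ x : EV n, ∀ c ∈ closure C, W.mkQ x = W.mkQ c → x ∈ closure C := by
    intro x c hc h
    have hxc : x - c ∈ W := (Submodule.Quotient.eq W).mp h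
    have : (x - c) + c ∈ closure C := hadd _ (hWsub hxc) _ hc
    simpa using this
  -- mkQ '' closure C is closed
  have hclosed : IsClosed (W.mkQ '' closure C) := by
    rw [← (W.isOpenQuotientMap_mkQ.isQuotientMap).isClosed_preimage]
    have : W.mkQ ⁻¹' (W.mkQ '' closure C) = closure C := by
      apply Subset.antisymm
      · rintro x hx
        obtain ⟨c, hc, hcx⟩ := hx
        exact hsat x c hc hcx.symm
      · exact subset_preimage_image _ _
    rw [this]; exact isClosed_closure
  have hclsub : closure (W.mkQ '' C) ⊆ W.mkQ '' closure C :=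
    closure_minimal (image_mono subset_closure) hclosed
  have himgcl : W.mkQ '' closure C ⊆ closure (W.mkQ '' C) :=
    image_closure_subset_closure_image W.isOpenQuotientMap_mkQ.continuous
  -- key inclusion
  have hkey : closure (W.mkQ '' C) ∩ (W.mkQ '' ratPts n) ⊆ W.mkQ '' (closure C ∩ ratPts n) := by
    rintro y ⟨hy1, q, hq, rfl⟩
    obtain ⟨c, hc, hcq⟩ := hclsub hy1
    exact ⟨q, ⟨hsat q c hc hcq.symm, hq⟩, rfl⟩
  have himg : W.mkQ '' plusPart n C = convexHull ℝ (W.mkQ '' (closure C ∩ ratPts n)) :=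
    W.mkQ.image_convexHull _
  have part1 : convexHull ℝ (closure (W.mkQ '' C) ∩ (W.mkQ '' ratPts n))
      = W.mkQ '' plusPart n C := by
    apply Subset.antisymm
    · rw [himg]
      exact convexHull_min (hkey.trans (subset_convexHull ℝ _)) (convex_convexHull ℝ _)
    · rw [himg]
      apply convexHull_mono
      rintro _ ⟨x, ⟨hx1, hx2⟩, rfl⟩
      exact ⟨himgcl ⟨x, hx1, rfl⟩, ⟨x, hx2, rfl⟩⟩
  refine ⟨part1, ?_⟩
  intro Γ _ ρ L₀ _ _ _ _ P _ hPsub hcover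
  constructor
  · rw [part1]
    exact image_mono hPsub
  · rintro _ ⟨x, hxC, rfl⟩
    obtain ⟨_, ⟨γ, rfl⟩, hx⟩ := hcover hxC
    exact mem_iUnion.mpr ⟨γ, ⟨x, hx, rfl⟩⟩
end
end

section
/- Let C be a nonempty open convex cone in V = ℝⁿ and let Π ⊆ C₊ be a polyhedral cone. Then there exists a rational polyhedral cone Π' with Π ⊆ Π' ⊆ C₊. -/
open Set Pointwise

noncomputable section

lemma zero_mem_ratCl {n : ℕ} (C : Set (EV n)) (hne : C.Nonempty) (hcone : IsConvexCone C) :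
    (0 : EV n) ∈ closure C ∩ ratPts n := by
  obtain ⟨x, hx⟩ := hne
  constructor
  · have h1 : Filter.Tendsto (fun k : ℕ => ((k : ℝ) + 1)⁻¹ • x) Filter.atTop (nhds ((0:ℝ) • x)) :=
      (tendsto_one_div_add_atTop_nhds_zero_nat.congr (by simp [one_div])).smul_const x
    rw [zero_smul] at h1
    exact mem_closure_of_tendsto h1 (Filter.Eventually.of_forall fun k =>
      hcone.2 x hx _ (by positivity))
  · intro i; exact ⟨0, by simp⟩

lemma nat_smul_mem_ratCl {n : ℕ} (C : Set (EV n)) (hcone : IsConvexCone C) (N : ℕ) (hN : 0 < N)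
    {w : EV n} (hw : w ∈ closure C ∩ ratPts n) : (N : ℝ) • w ∈ closure C ∩ ratPts n := by
  constructor
  · exact map_mem_closure (continuous_const_smul (N:ℝ)) hw.1
      (fun a ha => hcone.2 a ha _ (by positivity))
  · intro i
    obtain ⟨q, hq⟩ := hw.2 i
    exact ⟨(N : ℚ) * q, by push_cast [Pi.smul_apply, smul_eq_mul, hq]; ring⟩

lemma cone_mem_plusPart {n : ℕ} (C : Set (EV n)) (hne : C.Nonempty) (hcone : IsConvexCone C)
    {ι : Type} [Fintype ι] (w : ι → EV n) (hw : ∀ j, w j ∈ closure C ∩ ratPts n)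
    (c : ι → ℝ) (hc : ∀ j, 0 ≤ c j) : ∑ j, c j • w j ∈ plusPart n C := by
  set S := closure C ∩ ratPts n with hS
  have h0 : (0 : EV n) ∈ S := zero_mem_ratCl C hne hcone
  set s : ℝ := ∑ j, c j with hs
  rcases eq_or_lt_of_le (Finset.sum_nonneg fun j _ => hc j) with h | h
  · have : ∀ j ∈ Finset.univ, c j = 0 := by
      intro j hj
      exact (Finset.sum_eq_zero_iff_of_nonneg (fun j _ => hc j)).mp h.symm j hj
    have : ∑ j, c j • w j = 0 := Finset.sum_eq_zero fun j hj => by rw [this j hj, zero_smul]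
    rw [this]
    exact subset_convexHull ℝ S h0
  · set N : ℕ := ⌈s⌉₊ with hNdef
    have hN : 0 < N := Nat.ceil_pos.mpr h
    have hNR : (0:ℝ) < N := by exact_mod_cast hN
    have hsN : s ≤ N := Nat.le_ceil s
    refine mem_convexHull_of_exists_fintype (ι := Option ι)
      (fun o => o.elim (1 - s / N) (fun j => c j / N))
      (fun o => o.elim 0 (fun j => (N : ℝ) • w j)) ?_ ?_ ?_ ?_
    · rintro (_ | j)
      · simp only [Option.elim]
        have : s / N ≤ 1 := (div_le_one hNR).mpr hsN
        linarith
      · exact div_nonneg (hc j) hNR.le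
    · rw [Fintype.sum_option]
      simp only [Option.elim]
      rw [← Finset.sum_div]
      field_simp
      linarith [hs]
    · rintro (_ | j)
      · exact h0
      · exact nat_smul_mem_ratCl C hcone N hN (hw j)
    · rw [Fintype.sum_option]
      simp only [Option.elim, smul_zero, zero_add, smul_smul]
      refine Finset.sum_congr rfl fun j _ => ?_
      rw [div_mul_cancel₀ _ hNR.ne']

/-- For a nonempty open convex cone `C ⊆ ℝⁿ` and a polyhedral cone
`Π ⊆ C₊`, there exists a rational polyhedral cone `Π'` with `Π ⊆ Π' ⊆ C₊`. -/
theorem statement11 {n : ℕ}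
    (C : Set (EV n)) (hne : C.Nonempty) (hopen : IsOpen C) (hcone : IsConvexCone C)
    (P : Set (EV n)) (hP : IsPolyCone P) (hPsub : P ⊆ plusPart n C) :
    ∃ P' : Set (EV n), IsRatPolyCone (ratPts n) P' ∧ P ⊆ P' ∧ P' ⊆ plusPart n C := by
  obtain ⟨k, v, rfl⟩ := hP
  have hvP : ∀ i, v i ∈ plusPart n C := by
    intro i
    refine hPsub ⟨fun j => if j = i then 1 else 0, fun j => by positivity, ?_⟩
    simp
  have hdec : ∀ i, ∃ (ι : Type) (_ : Fintype ι) (d : ι → ℝ) (z : ι → EV n),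
      (∀ j, 0 ≤ d j) ∧ ∑ j, d j = 1 ∧ (∀ j, z j ∈ closure C ∩ ratPts n) ∧
      ∑ j, d j • z j = v i := fun i => mem_convexHull_iff_exists_fintype.mp (hvP i)
  choose ι inst d z hd hd1 hz hvz using hdec
  letI : ∀ i, Fintype (ι i) := inst
  set σ := Σ i : Fin k, ι i with hσ
  letI : Fintype σ := Sigma.instFintype
  set N := Fintype.card σ with hN
  set e : Fin N ≃ σ := (Fintype.equivFin σ).symm with he
  set W : σ → EV n := fun p => z p.1 p.2 with hW
  refine ⟨{x | ∃ c : Fin N → ℝ, (∀ i, 0 ≤ c i) ∧ x = ∑ t, c t • W (e t)},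
    ⟨N, fun t => W (e t), fun t => (hz _ _).2, rfl⟩, ?_, ?_⟩
  · rintro x ⟨c, hc, rfl⟩
    refine ⟨fun t => c (e t).1 * d (e t).1 (e t).2,
      fun t => mul_nonneg (hc _) (hd _ _), ?_⟩
    have : ∑ i, c i • v i = ∑ p : σ, (c p.1 * d p.1 p.2) • W p := by
      conv_rhs => rw [← Finset.univ_sigma_univ]
      rw [Finset.sum_sigma]
      refine Finset.sum_congr rfl fun i _ => ?_
      rw [← hvz i, Finset.smul_sum]
      exact Finset.sum_congr rfl fun j _ => by rw [smul_smul]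
    rw [this, ← Equiv.sum_comp e (fun p => (c p.1 * d p.1 p.2) • W p)]
  · rintro x ⟨c, hc, rfl⟩
    exact cone_mem_plusPart C hne hcone _ (fun t => hz _ _) c hc
end
end
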